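/- Let a, b be rational integers with 2 ≤ a ≤ b−2, b ≥ 2a−2 and (a,b) ∉ {(2,4), (2,5), (3,5)}, and let t, v₂, v₃ be integers with 1 ≤ t ≤ b−a, v₂ < 0 and v₃ ≥ 0. If β(t,v₂,v₃) = t − (b−a+1)v₂ − (b−a+1)b·v₃ + v₂ρ + v₃ρ² is totally positive, then the image of β(t,v₂,v₃) under the real embedding of K sending ρ to the smallest root ρ'' of f is strictly greater than 1. -/

import Mathlib

open IntermediateField

noncomputable section

/-- An element of a field `K` is totally positive if its image under every
real embedding of `K` is positive. -/
def TotallyPositive {K : Type*} [Field K] (x : K) : Prop :=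
  ∀ φ : K →+* ℝ, 0 < φ x

/-- The element `β(t,v₂,v₃) = t − (b−a+1)v₂ − (b−a+1)b·v₃ + v₂ρ + v₃ρ²` of `ℚ(ρ) ⊆ ℝ`. -/
def betaT (a b : ℤ) (ρ : ℝ) (t v₂ v₃ : ℤ) : ℚ⟮ρ⟯ :=
  ((t - (b - a + 1) * v₂ - (b - a + 1) * b * v₃ : ℤ) : ℚ⟮ρ⟯)
    + ((v₂ : ℤ) : ℚ⟮ρ⟯) * AdjoinSimple.gen ℚ ρ
    + ((v₃ : ℤ) : ℚ⟮ρ⟯) * AdjoinSimple.gen ℚ ρ ^ 2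

/-- The key purely polynomial inequality, valid for real `a ≥ 2`,
`b ≥ max (a+2) (2a−1)` with `ab ≥ 12`. -/
lemma key_poly_ineq (a b : ℝ) (ha : 2 ≤ a) (hb1 : a + 2 ≤ b) (hb2 : 2*a - 1 ≤ b)
    (hab : 12 ≤ a*b) :
    121 * ((b-a+1)-a+1) * (((b-a+1)-2)*a*a + (b-a+1)*b)
      ≤ 10*(a-1)*(b-a+1)*(11*(b-a)-1)*((b-a+1)*b - a*a - (b-a+1) + 1) := by
  have hu : (0:ℝ) ≤ a - 2 := by linarith
  have hv : (0:ℝ) ≤ b - 2*a + 1 := by linarith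
  have h2 : (0:ℝ) ≤ b - a - 2 := by linarith
  have h1 : (0:ℝ) ≤ a*b - 12 := by linarith
  linarith [h2, mul_nonneg hv h2, mul_nonneg (mul_nonneg hv hv) h1,
    mul_nonneg hu h1, mul_nonneg hu h2, mul_nonneg (mul_nonneg hu hv) h1,
    mul_nonneg (mul_nonneg hv hv) hv,
    mul_nonneg (mul_nonneg (mul_nonneg hv hv) hv) hv,
    mul_nonneg hu (mul_nonneg hv hv),
    mul_nonneg hu (mul_nonneg (mul_nonneg hv hv) hv),
    mul_nonneg hu (mul_nonneg (mul_nonneg (mul_nonneg hv hv) hv) hv),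
    mul_nonneg (mul_nonneg hu hu) hv,
    mul_nonneg (mul_nonneg hu hu) (mul_nonneg hv hv),
    mul_nonneg (mul_nonneg hu hu) (mul_nonneg (mul_nonneg hv hv) hv),
    mul_nonneg (mul_nonneg hu hu) hu,
    mul_nonneg (mul_nonneg (mul_nonneg hu hu) hu) hv,
    mul_nonneg (mul_nonneg (mul_nonneg hu hu) hu) (mul_nonneg hv hv),
    mul_nonneg (mul_nonneg (mul_nonneg hu hu) hu) hu,
    mul_nonneg (mul_nonneg (mul_nonneg (mul_nonneg hu hu) hu) hu) hv,
    mul_nonneg (mul_nonneg (mul_nonneg (mul_nonneg hu hu) hu) hu) hu]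

set_option maxHeartbeats 2000000 in
/-- The main real-number crunch: positivity at the middle conjugate `x ∈ (a-1,a)`
forces the value at the small conjugate `Y ∈ (0, 1/11]` to exceed `1`. -/
lemma crunch (a b x Y T M N : ℝ)
    (ha : 2 ≤ a) (hab1 : a + 2 ≤ b)
    (hbint : b = 2*a - 2 ∨ 2*a - 1 ≤ b) (hab12 : 12 ≤ a*b)
    (hx1 : a - 1 < x) (hx2 : x < a)
    (hY0 : 0 < Y) (hY11 : Y ≤ 1/11)
    (hT1 : 1 ≤ T) (hT2 : T ≤ b - a)
    (hM : 1 ≤ M) (hN : 0 ≤ N) (hNint : N = 0 ∨ 1 ≤ N)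
    (HX : 0 < T + M*((b-a+1) - x) - N*((b-a+1)*b - x^2)) :
    1 < T + M*((b-a+1) - Y) - N*((b-a+1)*b - Y^2) := by
  rcases hNint with hN0 | hN1
  · -- N = 0
    subst hN0
    have hBY : (2:ℝ) ≤ (b - a + 1) - Y := by linarith
    have hprod := mul_le_mul_of_nonneg_left hBY (show (0:ℝ) ≤ M - 1 by linarith)
    linarith [hprod]
  · -- N ≥ 1
    -- auxiliary products used everywhere
    have hxpos : (0:ℝ) < x := by linarith
    have q3 : x*x ≤ a*a := mul_le_mul hx2.le hx2.le hxpos.le (by linarith)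
    rcases hbint with hbeq | hb2a
    · -- b = 2a-2 : contradiction with HX
      exfalso
      subst hbeq
      have ha4 : (4:ℝ) ≤ a := by linarith
      have p1 := mul_nonneg (show (0:ℝ) ≤ M - 1 by linarith)
        (show (0:ℝ) ≤ x - ((2*a-2) - a + 1) by linarith)
      have hDpos0 : (0:ℝ) < ((2*a-2) - a + 1)*(2*a-2) - x^2 := by
        linarith [q3, mul_nonneg (show (0:ℝ) ≤ a by linarith) (show (0:ℝ) ≤ a - 4 by linarith)]
      have p2 := mul_nonneg (show (0:ℝ) ≤ N - 1 by linarith) hDpos0.le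
      have p3 := mul_pos (show (0:ℝ) < a - x by linarith)
        (show (0:ℝ) < a + x - 1 by linarith)
      have p4 := mul_nonneg (show (0:ℝ) ≤ a - 1 by linarith)
        (show (0:ℝ) ≤ a - 4 by linarith)
      linarith [p1, p2, p3, p4, HX]
    · -- b ≥ 2a-1 : main case
      have hxB : x < b - a + 1 := by linarith
      have hR1 : (0:ℝ) < (b-a+1) - x := by linarith
      -- basic positivity facts
      have q1 : (0:ℝ) ≤ (b - 2*a + 1) * b := mul_nonneg (by linarith) (by linarith)
      have q2 : a*2 ≤ a*(b-a) := mul_le_mul_of_nonneg_left (by linarith) (by linarith)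
      have hDpos : (0:ℝ) < (b-a+1)*b - x^2 := by linarith [q1, q2, q3]
      have q4 : Y*Y ≤ 1 := by
        have := mul_le_mul_of_nonneg_right hY11 hY0.le
        linarith
      have hBY2 : (0:ℝ) < (b-a+1)*b - Y^2 := by linarith [q1, q2, q4]
      -- rearranged positivity at x
      have s1 : N*((b-a+1)*b - x^2) < T + M*((b-a+1) - x) := by linarith
      have s2 : (b-a+1)*b - x^2 ≤ N*((b-a+1)*b - x^2) :=
        le_mul_of_one_le_left hDpos.le hN1
      have s3 : ((b-a+1)*b - x^2) - (b - a) < M*((b-a+1) - x) := by linarith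
      -- the key polynomial inequality
      have hkey := key_poly_ineq a b ha hab1 hb2a hab12
      -- lower bounds for the left-side factors
      have r1 : a*(b-1) ≤ (b-2*a+1)*(b-1) + a*(b-1) := by
        linarith [mul_nonneg (show (0:ℝ) ≤ b-2*a+1 by linarith)
          (show (0:ℝ) ≤ b-1 by linarith)]
      have r2 : a*(a+1) ≤ a*(b-1) := mul_le_mul_of_nonneg_left (by linarith) (by linarith)
      have hL1pos : (0:ℝ) < (b-a+1)*b - a*a - (b-a+1) + 1 := by linarith [r1, r2]
      have hL1' : (b-a+1)*b - a*a - (b-a+1) + 1 ≤ ((b-a+1)*b - x^2) - (b - a) := by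
        linarith [q3]
      have hL2pos : (0:ℝ) < 10/11*(a-1) := by linarith
      have hL2' : 10/11*(a-1) ≤ x - Y := by linarith
      have hL3pos : (0:ℝ) < (b-a+1)*(b-a-1/11) :=
        mul_pos (by linarith) (by linarith)
      have hL3' : (b-a+1)*(b-a-1/11) ≤ (b-a+1)*b - (b-a+1)*(x+Y) + x*Y := by
        have r3 : (0:ℝ) ≤ x*Y := mul_nonneg hxpos.le hY0.le
        have r4 : (b-a+1)*(x+Y) ≤ (b-a+1)*(a+1/11) :=
          mul_le_mul_of_nonneg_left (by linarith) (by linarith)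
        linarith [r3, r4]
      -- product chain
      have hprod1 : (10/11*(a-1)) * ((b-a+1)*(b-a-1/11))
          ≤ (x - Y) * ((b-a+1)*b - (b-a+1)*(x+Y) + x*Y) :=
        mul_le_mul hL2' hL3' hL3pos.le (by linarith)
      have hprod2 : ((b-a+1)*b - a*a - (b-a+1) + 1) * ((10/11*(a-1)) * ((b-a+1)*(b-a-1/11)))
          ≤ (((b-a+1)*b - x^2) - (b - a))
            * ((x - Y) * ((b-a+1)*b - (b-a+1)*(x+Y) + x*Y)) :=
        mul_le_mul hL1' hprod1 (mul_nonneg hL2pos.le hL3pos.le) (by linarith [q3])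
      -- upper bound for the right side
      have hR2 : ((b-a+1) - x) * ((b-a)*x^2 + ((b-a+1)*b - x^2))
          ≤ ((b-a+1) - a + 1) * (((b-a+1) - 2)*(a*a) + (b-a+1)*b) := by
        have r5 : (0:ℝ) ≤ (b-a-1) * (a*a - x*x) :=
          mul_nonneg (by linarith) (by linarith [q3])
        have h1 : (b-a)*x^2 + ((b-a+1)*b - x^2)
            ≤ ((b-a+1) - 2)*(a*a) + (b-a+1)*b := by linarith [r5]
        have r6 : (0:ℝ) ≤ (b-a)*x^2 := mul_nonneg (by linarith) (sq_nonneg x)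
        have h3 : (0:ℝ) < (b-a)*x^2 + ((b-a+1)*b - x^2) := by linarith [r6, hDpos]
        exact mul_le_mul (by linarith) h1 h3.le (by linarith)
      -- combine : (B-x)·((B-1)x²+D) ≤ (D-(B-1))·c
      have hF : ((b-a+1) - x) * ((b-a)*x^2 + ((b-a+1)*b - x^2))
          ≤ (((b-a+1)*b - x^2) - (b - a))
            * ((x - Y) * ((b-a+1)*b - (b-a+1)*(x+Y) + x*Y)) := by
        linarith [hkey, hprod2, hR2]
      -- derive M·c > (B-1)x² + D
      have hcpos : (0:ℝ) < (x - Y) * ((b-a+1)*b - (b-a+1)*(x+Y) + x*Y) := by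
        linarith [hprod1, mul_pos hL2pos hL3pos]
      have hMc : ((b-a)*x^2 + ((b-a+1)*b - x^2)) * ((b-a+1) - x)
          < (M * ((x - Y) * ((b-a+1)*b - (b-a+1)*(x+Y) + x*Y))) * ((b-a+1) - x) := by
        calc ((b-a)*x^2 + ((b-a+1)*b - x^2)) * ((b-a+1) - x)
            = ((b-a+1) - x) * ((b-a)*x^2 + ((b-a+1)*b - x^2)) := by ring
        _ ≤ (((b-a+1)*b - x^2) - (b - a))
              * ((x - Y) * ((b-a+1)*b - (b-a+1)*(x+Y) + x*Y)) := hF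
        _ < (M*((b-a+1) - x)) * ((x - Y) * ((b-a+1)*b - (b-a+1)*(x+Y) + x*Y)) :=
              mul_lt_mul_of_pos_right s3 hcpos
        _ = (M * ((x - Y) * ((b-a+1)*b - (b-a+1)*(x+Y) + x*Y))) * ((b-a+1) - x) := by ring
      have hMc2 : (b-a)*x^2 + ((b-a+1)*b - x^2)
          < M * ((x - Y) * ((b-a+1)*b - (b-a+1)*(x+Y) + x*Y)) :=
        lt_of_mul_lt_mul_right hMc hR1.le
      -- final assembly
      have r8 : Y*Y ≤ x*x := mul_le_mul (by linarith) (by linarith) hY0.le hxpos.le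
      have r7 : T*(x^2 - Y^2) ≤ (b-a)*(x^2 - Y^2) :=
        mul_le_mul_of_nonneg_right hT2 (by linarith [r8])
      have r9 : (0:ℝ) ≤ (b-a)*(Y^2) := mul_nonneg (by linarith) (sq_nonneg Y)
      have e1 : (N*((b-a+1)*b - x^2)) * ((b-a+1)*b - Y^2)
          < (T + M*((b-a+1) - x)) * ((b-a+1)*b - Y^2) :=
        mul_lt_mul_of_pos_right s1 hBY2
      have hfinal : 0 < (T + M*((b-a+1) - Y) - N*((b-a+1)*b - Y^2) - 1)
          * ((b-a+1)*b - x^2) := by linarith [e1, hMc2, r7, r9]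
      by_contra hG
      push_neg at hG
      linarith [hfinal, mul_nonneg (show (0:ℝ) ≤ 1 - (T + M*((b-a+1) - Y)
        - N*((b-a+1)*b - Y^2)) by linarith) hDpos.le]

set_option maxHeartbeats 1000000 in
/-- Let `2 ≤ a ≤ b−2`, `b ≥ 2a−2`, `(a,b) ∉ {(2,4),(2,5),(3,5)}`, and
`1 ≤ t ≤ b−a`, `v₂ < 0`, `v₃ ≥ 0`. If `β(t,v₂,v₃)` is totally positive, then its image
under the real embedding of `K` sending `ρ` to the smallest root `ρ''` of `f`
(characterized by `1/(ab) < ρ'' < 1/(ab−1)`) is strictly greater than `1`. -/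
theorem stmt_12 (a b : ℤ) (ha : 2 ≤ a) (hab : a ≤ b - 2)
    (ρ : ℝ) (hroot : ρ ^ 3 - ((a : ℝ) + (b : ℝ)) * ρ ^ 2 + (a : ℝ) * (b : ℝ) * ρ - 1 = 0)
    (hmax : ∀ x : ℝ, x ^ 3 - ((a : ℝ) + (b : ℝ)) * x ^ 2 + (a : ℝ) * (b : ℝ) * x - 1 = 0 → x ≤ ρ)
    (hdeg : Module.finrank ℚ ℚ⟮ρ⟯ = 3)
    (t v₂ v₃ : ℤ) (ht0 : 1 ≤ t) (ht1 : t ≤ b - a)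
    (hb : 2 * a - 2 ≤ b)
    (hexc : ¬ (a = 2 ∧ b = 4) ∧ ¬ (a = 2 ∧ b = 5) ∧ ¬ (a = 3 ∧ b = 5))
    (hv₂ : v₂ < 0) (hv₃ : 0 ≤ v₃)
    (hpos : TotallyPositive (betaT a b ρ t v₂ v₃)) :
    ∀ φ : ℚ⟮ρ⟯ →+* ℝ,
      1 / ((a : ℝ) * b) < φ (AdjoinSimple.gen ℚ ρ) →
      φ (AdjoinSimple.gen ℚ ρ) < 1 / ((a : ℝ) * b - 1) →
      1 < φ (betaT a b ρ t v₂ v₃) := by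
  intro φ hy1 hy2
  -- basic integer facts
  have hab12 : (12:ℤ) ≤ a * b := by
    rcases eq_or_ne a 2 with rfl | ha2
    · have hb4 : b ≠ 4 := fun h => hexc.1 ⟨rfl, h⟩
      have hb5 : b ≠ 5 := fun h => hexc.2.1 ⟨rfl, h⟩
      omega
    · rcases eq_or_ne a 3 with rfl | ha3
      · have hb5 : b ≠ 5 := fun h => hexc.2.2 ⟨rfl, h⟩
        omega
      · have ha4 : 4 ≤ a := by omega
        have hb6 : a + 2 ≤ b := by omega
        nlinarith
  -- real casts
  have haR : (2:ℝ) ≤ (a:ℝ) := by exact_mod_cast ha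
  have habR : (a:ℝ) + 2 ≤ (b:ℝ) := by
    have : a + 2 ≤ b := by omega
    exact_mod_cast this
  have hab12R : (12:ℝ) ≤ (a:ℝ) * b := by exact_mod_cast hab12
  have hbintZ : b = 2*a - 2 ∨ 2*a - 1 ≤ b := by omega
  have hbint : (b:ℝ) = 2*(a:ℝ) - 2 ∨ 2*(a:ℝ) - 1 ≤ (b:ℝ) := by
    rcases hbintZ with h | h
    · left; exact_mod_cast congrArg (Int.cast : ℤ → ℝ) h
    · right; exact_mod_cast h
  -- the minimal polynomial of ρ
  set p : Polynomial ℚ := Polynomial.X ^ 3 - Polynomial.C ((a:ℚ) + b) * Polynomial.X ^ 2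
      + Polynomial.C ((a:ℚ) * b) * Polynomial.X - Polynomial.C 1 with hp_def
  have hpmonic : p.Monic := by
    unfold p
    monicity!
  have hpdeg : p.natDegree = 3 := by
    unfold p
    compute_degree!
  have haev : Polynomial.aeval ρ p = 0 := by
    simp only [hp_def, map_sub, map_add, map_mul, map_pow, Polynomial.aeval_X,
      Polynomial.aeval_C, map_intCast, map_one]
    push_cast
    linear_combination hroot
  have hint : IsIntegral ℚ ρ := ⟨p, hpmonic, by rwa [← Polynomial.aeval_def]⟩
  have hmin : minpoly ℚ ρ = p := by
    have hdvd : minpoly ℚ ρ ∣ p := minpoly.dvd ℚ ρ haev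
    have hnd : (minpoly ℚ ρ).natDegree = 3 := by
      have h := IntermediateField.adjoin.finrank hint
      rw [hdeg] at h
      omega
    exact (Polynomial.eq_of_monic_of_dvd_of_natDegree_le (minpoly.monic hint) hpmonic hdvd
      (by rw [hpdeg, hnd])).symm
  -- find the middle root x ∈ (a-1, a)
  have hcont : ContinuousOn (fun s : ℝ => s * (s - a) * (s - b) - 1)
      (Set.Icc ((a:ℝ) - 1) a) := by fun_prop
  have hIVT := intermediate_value_Ioo' (by linarith : (a:ℝ) - 1 ≤ a) hcont
  have h0mem : (0:ℝ) ∈ Set.Ioo ((a:ℝ) * ((a:ℝ) - a) * ((a:ℝ) - b) - 1)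
      (((a:ℝ) - 1) * (((a:ℝ) - 1) - a) * (((a:ℝ) - 1) - b) - 1) := by
    constructor
    · have e : (a:ℝ) * ((a:ℝ) - a) * ((a:ℝ) - b) - 1 = -1 := by ring
      rw [e]; norm_num
    · nlinarith [mul_le_mul (by linarith : (1:ℝ) ≤ (a:ℝ) - 1)
        (by linarith : (3:ℝ) ≤ (b:ℝ) - (a:ℝ) + 1) (by norm_num) (by linarith)]
  obtain ⟨x, hxmem, hxval⟩ := hIVT h0mem
  have hX1 : (a:ℝ) - 1 < x := hxmem.1
  have hX2 : x < (a:ℝ) := hxmem.2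
  -- build the embedding sending gen to x
  set pb := IntermediateField.adjoin.powerBasis hint with hpb
  have hgen : pb.gen = AdjoinSimple.gen ℚ ρ := rfl
  have hxaev : Polynomial.aeval x (minpoly ℚ pb.gen) = 0 := by
    rw [hgen]
    erw [IntermediateField.minpoly_gen]
    rw [hmin, hp_def]
    simp only [map_sub, map_add, map_mul, map_pow, Polynomial.aeval_X, Polynomial.aeval_C,
      map_intCast, map_one]
    push_cast
    linear_combination hxval
  set ψ : ℚ⟮ρ⟯ →+* ℝ := (pb.lift x hxaev).toRingHom with hψ
  have hψgen : ψ (AdjoinSimple.gen ℚ ρ) = x := by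
    rw [hψ, ← hgen]
    exact pb.lift_gen x hxaev
  -- evaluating betaT under a ring hom
  have hval : ∀ χ : ℚ⟮ρ⟯ →+* ℝ, χ (betaT a b ρ t v₂ v₃) =
      ((t:ℝ) - ((b:ℝ) - a + 1) * v₂ - ((b:ℝ) - a + 1) * b * v₃)
        + (v₂:ℝ) * χ (AdjoinSimple.gen ℚ ρ) + (v₃:ℝ) * (χ (AdjoinSimple.gen ℚ ρ))^2 := by
    intro χ
    simp only [betaT, map_add, map_mul, map_pow, map_intCast]
    push_cast
    ring
  -- numeric setup
  set Y : ℝ := φ (AdjoinSimple.gen ℚ ρ) with hY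
  have hYpos : 0 < Y := lt_trans (by positivity) hy1
  have hY11 : Y ≤ 1/11 := by
    have h11 : (1:ℝ)/((a:ℝ)*b - 1) ≤ 1/11 :=
      one_div_le_one_div_of_le (by norm_num) (by linarith)
    linarith
  have hT1 : (1:ℝ) ≤ (t:ℝ) := by exact_mod_cast ht0
  have hT2 : (t:ℝ) ≤ (b:ℝ) - (a:ℝ) := by
    have : (t:ℝ) ≤ ((b - a : ℤ):ℝ) := by exact_mod_cast ht1
    push_cast at this; linarith
  have hM : (1:ℝ) ≤ -(v₂:ℝ) := by
    have : ((1:ℤ):ℝ) ≤ ((-v₂ : ℤ):ℝ) := by exact_mod_cast (by omega : (1:ℤ) ≤ -v₂)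
    push_cast at this; linarith
  have hN : (0:ℝ) ≤ (v₃:ℝ) := by exact_mod_cast hv₃
  have hNint : (v₃:ℝ) = 0 ∨ (1:ℝ) ≤ (v₃:ℝ) := by
    rcases (by omega : v₃ = 0 ∨ 1 ≤ v₃) with h | h
    · left; exact_mod_cast congrArg (Int.cast : ℤ → ℝ) h
    · right; exact_mod_cast h
  -- positivity at ψ (the embedding sending gen to x)
  have HX : 0 < ((t:ℝ) - ((b:ℝ) - a + 1) * v₂ - ((b:ℝ) - a + 1) * b * v₃)
      + (v₂:ℝ) * x + (v₃:ℝ) * x^2 := by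
    have := hpos ψ
    rwa [hval ψ, hψgen] at this
  have HX' : 0 < (t:ℝ) + (-(v₂:ℝ))*(((b:ℝ)-(a:ℝ)+1) - x)
      - (v₃:ℝ)*(((b:ℝ)-(a:ℝ)+1)*(b:ℝ) - x^2) := by linarith [HX]
  -- clean up heavy context before the numeric part
  clear_value p pb ψ Y
  clear hψgen hψ hxaev hgen hpb hmin hint haev hpdeg hpmonic hp_def hcont hIVT h0mem hxval
    hmax hroot hdeg hpos ψ pb p
  -- final reduction via crunch
  have main := crunch (a:ℝ) (b:ℝ) x Y (t:ℝ) (-(v₂:ℝ)) (v₃:ℝ)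
    haR habR hbint hab12R hX1 hX2 hYpos hY11 hT1 hT2 hM hN hNint HX'
  rw [hval φ, ← hY]
  linarith [main]
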